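/- arXiv:1007.4924 — 3 statements merged into one kernel-verified Lean document; each statement's English description precedes it below -/
import Mathlib

section
/- For any spinor field φ on a Spin^c manifold and any symmetric 2-tensor E and skew-symmetric 2-tensor Q on TM, the modified connection ∇̃_X φ := ∇_X φ + E(X)·φ + Q(X)·φ satisfies pointwise |∇̃φ|² = |∇φ|² + (|E|² + |Q|²)|φ|² + 2∑ᵢ Re⟨(E+Q)(eᵢ)·φ, ∇_{eᵢ}φ⟩; in particular when E = ℓ^φ and Q = q^φ one has |∇̃φ|² = |∇φ|² − (|ℓ^φ|² + |q^φ|²)|φ|². -/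
/-!
The Clifford relation and skew-adjointness of Clifford multiplication give
`Re ⟪v·ψ, w·ψ⟫ = ⟪v, w⟫ |ψ|²`, so expanding `|∇φ + (E + Q)(eᵢ)·φ|²` produces the cross term
`2 ∑ᵢ ⟪E eᵢ, Q eᵢ⟫ |φ|²`. That term is `2 tr(EQ) |φ|²`, and `tr(EQ) = -tr(QE) = -tr(EQ)`
vanishes for symmetric `E` and skew `Q`. For `E + Q = ℓ^φ + q^φ` one has
`Re ⟪φ, w·∇_v φ⟫ = ⟪(E + Q) v, w⟫ |φ|²`; taking `w = (E + Q) v` turns the remaining cross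
term into `-2 |E + Q|² |φ|²`.
-/

open scoped InnerProductSpace

section Trace

variable {V ι : Type*} [NormedAddCommGroup V] [InnerProductSpace ℝ V] [Fintype ι]

lemma sum_inner_apply_eq_zero_of_isSymmetric_of_skew (e : OrthonormalBasis ι ℝ V)
    {E Q : V →ₗ[ℝ] V} (hE : E.IsSymmetric) (hQ : ∀ v w, ⟪Q v, w⟫_ℝ = -⟪v, Q w⟫_ℝ) :
    ∑ i, ⟪E (e i), Q (e i)⟫_ℝ = 0 := by
  have hEQ : ∑ i, ⟪E (e i), Q (e i)⟫_ℝ = LinearMap.trace ℝ V (E * Q) := by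
    simp only [LinearMap.trace_eq_sum_inner _ e, hE _, Module.End.mul_apply]
  have hQE : ∑ i, ⟪E (e i), Q (e i)⟫_ℝ = -LinearMap.trace ℝ V (Q * E) := by
    rw [LinearMap.trace_eq_sum_inner _ e, ← Finset.sum_neg_distrib]
    refine Finset.sum_congr rfl fun i _ => ?_
    rw [Module.End.mul_apply, ← hQ, real_inner_comm]
  rw [LinearMap.trace_mul_comm] at hQE
  linarith

lemma sum_norm_add_sq_of_isSymmetric_of_skew (e : OrthonormalBasis ι ℝ V)
    {E Q : V →ₗ[ℝ] V} (hE : E.IsSymmetric) (hQ : ∀ v w, ⟪Q v, w⟫_ℝ = -⟪v, Q w⟫_ℝ) :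
    ∑ i, ‖E (e i) + Q (e i)‖ ^ 2 = ∑ i, ‖E (e i)‖ ^ 2 + ∑ i, ‖Q (e i)‖ ^ 2 := by
  simp only [norm_add_sq_real, Finset.sum_add_distrib, ← Finset.mul_sum,
    sum_inner_apply_eq_zero_of_isSymmetric_of_skew e hE hQ]
  ring

end Trace

section Clifford

variable {V H : Type*} [NormedAddCommGroup V] [InnerProductSpace ℝ V]
  [NormedAddCommGroup H] [InnerProductSpace ℂ H] (cl : V →ₗ[ℝ] H →ₗ[ℂ] H)

lemma re_inner_clifford_clifford
    (hclifford : ∀ (v w : V) (φ : H),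
      cl v (cl w φ) + cl w (cl v φ) = -(2 * (⟪v, w⟫_ℝ : ℂ)) • φ)
    (hskew : ∀ (v : V) (φ₁ φ₂ : H), ⟪cl v φ₁, φ₂⟫_ℂ = -⟪φ₁, cl v φ₂⟫_ℂ)
    (ψ : H) (v w : V) :
    (⟪cl v ψ, cl w ψ⟫_ℂ).re = ⟪v, w⟫_ℝ * ‖ψ‖ ^ 2 := by
  have hsum : ⟪cl v ψ, cl w ψ⟫_ℂ + ⟪cl w ψ, cl v ψ⟫_ℂ = ((2 * ⟪v, w⟫_ℝ : ℝ) : ℂ) * ⟪ψ, ψ⟫_ℂ := by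
    rw [hskew, hskew, ← neg_add, ← inner_add_right, hclifford, inner_smul_right, neg_mul, neg_neg,
      Complex.ofReal_mul, Complex.ofReal_ofNat]
  have hψ : (⟪ψ, ψ⟫_ℂ).re = ‖ψ‖ ^ 2 := inner_self_eq_norm_sq (𝕜 := ℂ) ψ
  have hre := congrArg Complex.re hsum
  rw [← inner_conj_symm (cl w ψ) (cl v ψ), Complex.add_re, Complex.conj_re, Complex.re_ofReal_mul,
    hψ] at hre
  linarith

lemma norm_clifford_sq (hclifford : ∀ (v w : V) (φ : H),
      cl v (cl w φ) + cl w (cl v φ) = -(2 * (⟪v, w⟫_ℝ : ℂ)) • φ)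
    (hskew : ∀ (v : V) (φ₁ φ₂ : H), ⟪cl v φ₁, φ₂⟫_ℂ = -⟪φ₁, cl v φ₂⟫_ℂ)
    (ψ : H) (v : V) : ‖cl v ψ‖ ^ 2 = ‖v‖ ^ 2 * ‖ψ‖ ^ 2 := by
  rw [@norm_sq_eq_re_inner ℂ, ← real_inner_self_eq_norm_sq v]
  exact re_inner_clifford_clifford cl hclifford hskew ψ v v

lemma norm_add_clifford_sq (hclifford : ∀ (v w : V) (φ : H),
      cl v (cl w φ) + cl w (cl v φ) = -(2 * (⟪v, w⟫_ℝ : ℂ)) • φ)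
    (hskew : ∀ (v : V) (φ₁ φ₂ : H), ⟪cl v φ₁, φ₂⟫_ℂ = -⟪φ₁, cl v φ₂⟫_ℂ)
    (ψ χ : H) (v : V) :
    ‖χ + cl v ψ‖ ^ 2 = ‖χ‖ ^ 2 + ‖v‖ ^ 2 * ‖ψ‖ ^ 2 + 2 * (⟪cl v ψ, χ⟫_ℂ).re := by
  rw [add_comm χ, @norm_add_sq ℂ, norm_clifford_sq cl hclifford hskew, RCLike.re_to_complex]
  ring

lemma re_inner_clifford_of_energyMomentum {ψ : H} (hψ : ψ ≠ 0) {d : V →ₗ[ℝ] H}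
    {E Q : V →ₗ[ℝ] V}
    (hℓ : ∀ v w, ⟪E v, w⟫_ℝ = (1 / 2) * (⟪ψ, cl v (d w) + cl w (d v)⟫_ℂ).re / ‖ψ‖ ^ 2)
    (hq : ∀ v w, ⟪Q v, w⟫_ℝ = (1 / 2) * (⟪ψ, cl w (d v) - cl v (d w)⟫_ℂ).re / ‖ψ‖ ^ 2)
    (v w : V) :
    (⟪ψ, cl w (d v)⟫_ℂ).re = ⟪E v + Q v, w⟫_ℝ * ‖ψ‖ ^ 2 := by
  have hψ2 : ‖ψ‖ ^ 2 ≠ 0 := by positivity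
  rw [inner_add_left, hℓ, hq, inner_add_right, inner_sub_right, Complex.add_re, Complex.sub_re]
  field_simp
  ring

lemma re_inner_clifford_energyMomentum_eq
    (hskew : ∀ (v : V) (φ₁ φ₂ : H), ⟪cl v φ₁, φ₂⟫_ℂ = -⟪φ₁, cl v φ₂⟫_ℂ)
    {ψ : H} (hψ : ψ ≠ 0) {d : V →ₗ[ℝ] H} {E Q : V →ₗ[ℝ] V}
    (hℓ : ∀ v w, ⟪E v, w⟫_ℝ = (1 / 2) * (⟪ψ, cl v (d w) + cl w (d v)⟫_ℂ).re / ‖ψ‖ ^ 2)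
    (hq : ∀ v w, ⟪Q v, w⟫_ℝ = (1 / 2) * (⟪ψ, cl w (d v) - cl v (d w)⟫_ℂ).re / ‖ψ‖ ^ 2)
    (v : V) :
    (⟪cl (E v + Q v) ψ, d v⟫_ℂ).re = -(‖E v + Q v‖ ^ 2 * ‖ψ‖ ^ 2) := by
  rw [hskew, Complex.neg_re, re_inner_clifford_of_energyMomentum cl hψ hℓ hq,
    real_inner_self_eq_norm_sq]

end Clifford

theorem stmt_4_general {V H : Type*} [NormedAddCommGroup V] [InnerProductSpace ℝ V]
    [NormedAddCommGroup H] [InnerProductSpace ℂ H]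
    {n : ℕ} (e : OrthonormalBasis (Fin n) ℝ V)
    (cl : V →ₗ[ℝ] H →ₗ[ℂ] H)
    (hclifford : ∀ (v w : V) (φ : H),
      cl v (cl w φ) + cl w (cl v φ) = -(((2 * (inner ℝ v w : ℝ)) : ℂ)) • φ)
    (hskew : ∀ (v : V) (φ₁ φ₂ : H), (inner ℂ (cl v φ₁) φ₂ : ℂ) = - inner ℂ φ₁ (cl v φ₂))
    (ψ : H) (d : V →ₗ[ℝ] H) (E Q : V →ₗ[ℝ] V)
    (hE : ∀ v w, (inner ℝ (E v) w : ℝ) = (inner ℝ v (E w) : ℝ))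
    (hQ : ∀ v w, (inner ℝ (Q v) w : ℝ) = -(inner ℝ v (Q w) : ℝ)) :
    (∑ i, ‖d (e i) + cl (E (e i)) ψ + cl (Q (e i)) ψ‖ ^ 2 =
        ∑ i, ‖d (e i)‖ ^ 2
          + ((∑ i, ‖E (e i)‖ ^ 2) + ∑ i, ‖Q (e i)‖ ^ 2) * ‖ψ‖ ^ 2
          + 2 * ∑ i, (inner ℂ (cl (E (e i) + Q (e i)) ψ) (d (e i)) : ℂ).re)
    ∧ (ψ ≠ 0 →
        -- E = ℓ^ψ and Q = q^ψ, the symmetric and antisymmetric energy–momentum tensors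
        (∀ v w, (inner ℝ (E v) w : ℝ) =
          (1 / 2) * ((inner ℂ ψ (cl v (d w) + cl w (d v)) : ℂ).re) / ‖ψ‖ ^ 2) →
        (∀ v w, (inner ℝ (Q v) w : ℝ) =
          (1 / 2) * ((inner ℂ ψ (cl w (d v) - cl v (d w)) : ℂ).re) / ‖ψ‖ ^ 2) →
        ∑ i, ‖d (e i) + cl (E (e i)) ψ + cl (Q (e i)) ψ‖ ^ 2 =
          ∑ i, ‖d (e i)‖ ^ 2
            - ((∑ i, ‖E (e i)‖ ^ 2) + ∑ i, ‖Q (e i)‖ ^ 2) * ‖ψ‖ ^ 2) := by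
  have hnorm : ∀ i, ‖d (e i) + cl (E (e i)) ψ + cl (Q (e i)) ψ‖ ^ 2 =
      ‖d (e i)‖ ^ 2 + ‖E (e i) + Q (e i)‖ ^ 2 * ‖ψ‖ ^ 2
        + 2 * (inner ℂ (cl (E (e i) + Q (e i)) ψ) (d (e i))).re := fun i => by
    rw [add_assoc, ← LinearMap.add_apply, ← map_add, norm_add_clifford_sq cl hclifford hskew]
  have hsplit := sum_norm_add_sq_of_isSymmetric_of_skew e hE hQ
  have hmain : ∑ i, ‖d (e i) + cl (E (e i)) ψ + cl (Q (e i)) ψ‖ ^ 2 =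
      ∑ i, ‖d (e i)‖ ^ 2
        + ((∑ i, ‖E (e i)‖ ^ 2) + ∑ i, ‖Q (e i)‖ ^ 2) * ‖ψ‖ ^ 2
        + 2 * ∑ i, (inner ℂ (cl (E (e i) + Q (e i)) ψ) (d (e i)) : ℂ).re := by
    simp only [hnorm, Finset.sum_add_distrib, ← Finset.sum_mul, ← Finset.mul_sum, hsplit]
  refine ⟨hmain, fun hψ hℓ hq => ?_⟩
  simp only [hmain, re_inner_clifford_energyMomentum_eq cl hskew hψ hℓ hq, Finset.sum_neg_distrib,
    ← Finset.sum_mul, hsplit]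
  ring

/-- (Pointwise, in a fixed fibre of the spinor bundle.)  Let `cl` be
Clifford multiplication by tangent vectors (skew-Hermitian, satisfying the Clifford
relation), `e` an orthonormal tangent frame, `ψ` the value of the spinor field `φ` and
`d v = ∇_v φ` its covariant derivative.  For any symmetric `E` and skew-symmetric `Q`, the
modified connection `∇̃_X φ = ∇_X φ + E(X)·φ + Q(X)·φ` satisfies
`|∇̃φ|² = |∇φ|² + (|E|² + |Q|²)|φ|² + 2∑ᵢ Re⟨(E+Q)(eᵢ)·φ, ∇_{eᵢ}φ⟩`;
in particular, when `E = ℓ^φ` and `Q = q^φ` (the energy–momentum tensors of `φ`),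
`|∇̃φ|² = |∇φ|² − (|ℓ^φ|² + |q^φ|²)|φ|²`. -/
theorem stmt_4 {V H : Type*} [NormedAddCommGroup V] [InnerProductSpace ℝ V]
    [FiniteDimensional ℝ V] [NormedAddCommGroup H] [InnerProductSpace ℂ H]
    {n : ℕ} (e : OrthonormalBasis (Fin n) ℝ V)
    (cl : V →ₗ[ℝ] H →ₗ[ℂ] H)
    (hclifford : ∀ (v w : V) (φ : H),
      cl v (cl w φ) + cl w (cl v φ) = -(((2 * (inner ℝ v w : ℝ)) : ℂ)) • φ)
    (hskew : ∀ (v : V) (φ₁ φ₂ : H), (inner ℂ (cl v φ₁) φ₂ : ℂ) = - inner ℂ φ₁ (cl v φ₂))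
    (ψ : H) (d : V →ₗ[ℝ] H) (E Q : V →ₗ[ℝ] V)
    (hE : ∀ v w, (inner ℝ (E v) w : ℝ) = (inner ℝ v (E w) : ℝ))
    (hQ : ∀ v w, (inner ℝ (Q v) w : ℝ) = -(inner ℝ v (Q w) : ℝ)) :
    (∑ i, ‖d (e i) + cl (E (e i)) ψ + cl (Q (e i)) ψ‖ ^ 2 =
        ∑ i, ‖d (e i)‖ ^ 2
          + ((∑ i, ‖E (e i)‖ ^ 2) + ∑ i, ‖Q (e i)‖ ^ 2) * ‖ψ‖ ^ 2
          + 2 * ∑ i, (inner ℂ (cl (E (e i) + Q (e i)) ψ) (d (e i)) : ℂ).re)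
    ∧ (ψ ≠ 0 →
        -- E = ℓ^ψ and Q = q^ψ, the symmetric and antisymmetric energy–momentum tensors
        (∀ v w, (inner ℝ (E v) w : ℝ) =
          (1 / 2) * ((inner ℂ ψ (cl v (d w) + cl w (d v)) : ℂ).re) / ‖ψ‖ ^ 2) →
        (∀ v w, (inner ℝ (Q v) w : ℝ) =
          (1 / 2) * ((inner ℂ ψ (cl w (d v) - cl v (d w)) : ℂ).re) / ‖ψ‖ ^ 2) →
        ∑ i, ‖d (e i) + cl (E (e i)) ψ + cl (Q (e i)) ψ‖ ^ 2 =
          ∑ i, ‖d (e i)‖ ^ 2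
            - ((∑ i, ‖E (e i)‖ ^ 2) + ∑ i, ‖Q (e i)‖ ^ 2) * ‖ψ‖ ^ 2) :=
  stmt_4_general e cl hclifford hskew ψ d E Q hE hQ
end

section
/- If a nowhere-vanishing spinor field φ on a Spin^c manifold satisfies ∇_X φ = −E(X)·φ for all vector fields X, where E is a field of endomorphisms of TM, then the symmetric part of E equals ℓ^φ and the skew-symmetric part of E equals q^φ. -/
/-!
Clifford-polarising `⟨φ, X·Y·φ⟩` gives `Re⟨φ, X·Y·φ⟩ = -g(X, Y)|φ|²`, because skew-Hermitian
Clifford multiplication makes `Re⟨φ, X·Y·φ⟩` symmetric in `X, Y`. Substituting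
`∇_Y φ = -E(Y)·φ` then turns `Re⟨X·∇_Y φ, φ⟩` into `g(X, E(Y))|φ|²`, and `ℓ^φ`, `q^φ` are
the symmetrisation and skew-symmetrisation of this bilinear form.
-/

section CliffordModule

variable {V H : Type*} [NormedAddCommGroup V] [InnerProductSpace ℝ V]
  [NormedAddCommGroup H] [InnerProductSpace ℂ H] {cl : V →ₗ[ℝ] H →ₗ[ℂ] H}

lemma re_inner_cl_cl_comm
    (hskew : ∀ (v : V) (ξ₁ ξ₂ : H), (inner ℂ (cl v ξ₁) ξ₂ : ℂ) = - inner ℂ ξ₁ (cl v ξ₂))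
    (ξ : H) (v a : V) :
    (inner ℂ ξ (cl v (cl a ξ)) : ℂ).re = (inner ℂ ξ (cl a (cl v ξ)) : ℂ).re := by
  have hva : (inner ℂ ξ (cl v (cl a ξ)) : ℂ) = -inner ℂ (cl v ξ) (cl a ξ) := by
    rw [hskew, neg_neg]
  have hav : (inner ℂ ξ (cl a (cl v ξ)) : ℂ) = -inner ℂ (cl a ξ) (cl v ξ) := by
    rw [hskew, neg_neg]
  rw [hva, hav, ← inner_conj_symm (cl v ξ), Complex.neg_re, Complex.neg_re, Complex.conj_re]

lemma re_inner_cl_cl_add_swap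
    (hclifford : ∀ (v w : V) (ξ : H),
      cl v (cl w ξ) + cl w (cl v ξ) = -(((2 * (inner ℝ v w : ℝ)) : ℂ)) • ξ)
    (ξ : H) (v a : V) :
    (inner ℂ ξ (cl v (cl a ξ)) : ℂ).re + (inner ℂ ξ (cl a (cl v ξ)) : ℂ).re =
      -(2 * inner ℝ v a * ‖ξ‖ ^ 2) := by
  rw [← Complex.add_re, ← inner_add_right, hclifford, inner_smul_right, ← Complex.ofReal_ofNat,
    ← Complex.ofReal_mul, ← Complex.ofReal_neg, Complex.re_ofReal_mul, ← RCLike.re_to_complex,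
    inner_self_eq_norm_sq]
  ring

lemma re_inner_cl_cl_self
    (hclifford : ∀ (v w : V) (ξ : H),
      cl v (cl w ξ) + cl w (cl v ξ) = -(((2 * (inner ℝ v w : ℝ)) : ℂ)) • ξ)
    (hskew : ∀ (v : V) (ξ₁ ξ₂ : H), (inner ℂ (cl v ξ₁) ξ₂ : ℂ) = - inner ℂ ξ₁ (cl v ξ₂))
    (ξ : H) (v a : V) :
    (inner ℂ ξ (cl v (cl a ξ)) : ℂ).re = -(inner ℝ v a * ‖ξ‖ ^ 2) := by
  linarith [re_inner_cl_cl_add_swap hclifford ξ v a, re_inner_cl_cl_comm hskew ξ v a]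

end CliffordModule

/-- If a nowhere-vanishing spinor field `φ` satisfies `∇_X φ = −E(X)·φ`
for a field `E` of endomorphisms of `TM`, then the symmetric part of `E` is the
energy–momentum tensor `ℓ^φ` and the skew-symmetric part of `E` is `q^φ`.

Pointwise model: `V` is the tangent space, `H` the spinor fibre, `cl` Clifford
multiplication (skew-Hermitian, Clifford relation), `φ : M → H` the spinor field and
`d x : V →ₗ H` its covariant derivative at `x` (as a tensorial map in the direction). -/
theorem stmt_5 {M V H : Type*} [NormedAddCommGroup V] [InnerProductSpace ℝ V]
    [NormedAddCommGroup H] [InnerProductSpace ℂ H]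
    (cl : V →ₗ[ℝ] H →ₗ[ℂ] H)
    (hclifford : ∀ (v w : V) (ξ : H),
      cl v (cl w ξ) + cl w (cl v ξ) = -(((2 * (inner ℝ v w : ℝ)) : ℂ)) • ξ)
    (hskew : ∀ (v : V) (ξ₁ ξ₂ : H), (inner ℂ (cl v ξ₁) ξ₂ : ℂ) = - inner ℂ ξ₁ (cl v ξ₂))
    (φ : M → H) (hφ : ∀ x, φ x ≠ 0)
    (d : M → (V →ₗ[ℝ] H)) (E : M → (V →ₗ[ℝ] V))
    (hE : ∀ x v, d x v = - cl (E x v) (φ x)) :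
    -- the symmetric part of E is ℓ^φ …
    (∀ x v w, (1 / 2) * ((inner ℝ (E x v) w : ℝ) + (inner ℝ v (E x w) : ℝ)) =
        (1 / 2) * ((inner ℂ (φ x) (cl v (d x w) + cl w (d x v)) : ℂ).re) / ‖φ x‖ ^ 2)
    -- … and the skew-symmetric part of E is q^φ
    ∧ (∀ x v w, (1 / 2) * ((inner ℝ (E x v) w : ℝ) - (inner ℝ v (E x w) : ℝ)) =
        (1 / 2) * ((inner ℂ (φ x) (cl w (d x v) - cl v (d x w)) : ℂ).re) / ‖φ x‖ ^ 2) := by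
  have hd : ∀ x v w, (inner ℂ (φ x) (cl v (d x w)) : ℂ).re = inner ℝ v (E x w) * ‖φ x‖ ^ 2 := by
    intro x v w
    rw [hE, map_neg, inner_neg_right, Complex.neg_re, re_inner_cl_cl_self hclifford hskew, neg_neg]
  have hnorm : ∀ x, ‖φ x‖ ^ 2 ≠ 0 := fun x => pow_ne_zero 2 (norm_ne_zero_iff.mpr (hφ x))
  constructor <;> intro x v w
  · rw [inner_add_right, Complex.add_re, hd, hd, eq_div_iff (hnorm x), real_inner_comm (E x v)]
    ring
  · rw [inner_sub_right, Complex.sub_re, hd, hd, eq_div_iff (hnorm x), real_inner_comm (E x v)]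
    ring
end

section
/- On the Berger sphere (S³, g^h) with its canonical Spin^c structure twisted by the trivial line bundle with connection α = (1−h²)ξ, the spinor ψ^h ⊗ σ is an eigenspinor of the Spin^c Dirac operator with eigenvalue h²/2 − 2, and its Energy–Momentum tensor has eigenvalues −h²/2 (double) and 3h²/2 − 2 (in direction ξ); hence |ℓ^{ψ^h⊗σ}|² = 2(h²/2)² + (3h²/2 − 2)². -/
/-! In the orthonormal frame `{ξ, he₁, he₂}` every covariant derivative of `φ` is a real
multiple `cᵢ eᵢ·φ` of a Clifford multiplication. Since `eᵢ·eᵢ = -1`, the Dirac operator gives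
`Dφ = -(∑ cᵢ) φ` and the diagonal of the energy–momentum tensor is `-cᵢ`; for `i ≠ j` the
endomorphism `eᵢ·eⱼ` is skew-adjoint, so `⟨φ, eᵢ·eⱼ·φ⟩` is purely imaginary and the tensor
is diagonal. With `c = (2 - 3h²/2, h²/2, h²/2)` everything follows. -/

/-- The energy–momentum tensor `T^φ(eᵢ,eⱼ) = ½ Re⟨eᵢ·∇_{eⱼ}φ + eⱼ·∇_{eᵢ}φ, φ/|φ|²⟩` in an
orthonormal frame `e`, where `d i x = ∇_{eᵢ}φ (x)`. -/
noncomputable def emTensor {M V H : Type*} [NormedAddCommGroup V] [InnerProductSpace ℝ V]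
    [NormedAddCommGroup H] [InnerProductSpace ℂ H]
    (cl : V →ₗ[ℝ] H →ₗ[ℂ] H) (e : OrthonormalBasis (Fin 3) ℝ V)
    (φ : M → H) (d : Fin 3 → M → H) (i j : Fin 3) (x : M) : ℝ :=
  (1 / 2) * ((inner ℂ (φ x) (cl (e i) (d j x) + cl (e j) (d i x)) : ℂ).re) / ‖φ x‖ ^ 2

section Clifford

variable {V H : Type*} [NormedAddCommGroup V] [InnerProductSpace ℝ V]
  [NormedAddCommGroup H] [InnerProductSpace ℂ H] {cl : V →ₗ[ℝ] H →ₗ[ℂ] H}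

theorem cl_cl_self
    (hclifford : ∀ (v w : V) (ψ : H),
      cl v (cl w ψ) + cl w (cl v ψ) = -(((2 * (inner ℝ v w : ℝ)) : ℂ)) • ψ)
    (v : V) (ψ : H) : cl v (cl v ψ) = -((‖v‖ ^ 2 : ℝ) : ℂ) • ψ := by
  have h := hclifford v v ψ
  rw [← two_smul ℂ, real_inner_self_eq_norm_sq] at h
  exact smul_right_injective H two_ne_zero (h.trans (by push_cast; module))

theorem cl_cl_anticomm
    (hclifford : ∀ (v w : V) (ψ : H),
      cl v (cl w ψ) + cl w (cl v ψ) = -(((2 * (inner ℝ v w : ℝ)) : ℂ)) • ψ)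
    {v w : V} (hvw : inner ℝ v w = 0) (ψ : H) : cl w (cl v ψ) = -cl v (cl w ψ) := by
  have h := hclifford v w ψ
  rw [hvw, Complex.ofReal_zero, mul_zero, neg_zero, zero_smul] at h
  exact eq_neg_of_add_eq_zero_right h

theorem re_inner_cl_cl_eq_zero
    (hclifford : ∀ (v w : V) (ψ : H),
      cl v (cl w ψ) + cl w (cl v ψ) = -(((2 * (inner ℝ v w : ℝ)) : ℂ)) • ψ)
    (hskew : ∀ (v : V) (ψ₁ ψ₂ : H), (inner ℂ (cl v ψ₁) ψ₂ : ℂ) = - inner ℂ ψ₁ (cl v ψ₂))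
    {v w : V} (hvw : inner ℝ v w = 0) (ψ : H) : (inner ℂ ψ (cl v (cl w ψ))).re = 0 := by
  have hconj : starRingEnd ℂ (inner ℂ ψ (cl v (cl w ψ))) = -inner ℂ ψ (cl v (cl w ψ)) :=
    calc starRingEnd ℂ (inner ℂ ψ (cl v (cl w ψ)))
        = inner ℂ (cl v (cl w ψ)) ψ := inner_conj_symm _ _
      _ = -inner ℂ (cl w ψ) (cl v ψ) := hskew _ _ _
      _ = inner ℂ ψ (cl w (cl v ψ)) := by rw [hskew, neg_neg]
      _ = -inner ℂ ψ (cl v (cl w ψ)) := by rw [cl_cl_anticomm hclifford hvw, inner_neg_right]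
  have hre := congrArg Complex.re hconj
  rw [Complex.conj_re, Complex.neg_re] at hre
  linarith

theorem sum_cl_smul_cl_of_orthonormal {ι : Type*} [Fintype ι]
    (hclifford : ∀ (v w : V) (ψ : H),
      cl v (cl w ψ) + cl w (cl v ψ) = -(((2 * (inner ℝ v w : ℝ)) : ℂ)) • ψ)
    {e : ι → V} (he : Orthonormal ℝ e) (c : ι → ℝ) (ψ : H) :
    ∑ i, cl (e i) ((c i : ℂ) • cl (e i) ψ) = -((∑ i, c i : ℝ) : ℂ) • ψ := by
  calc ∑ i, cl (e i) ((c i : ℂ) • cl (e i) ψ) = ∑ i, -((c i : ℂ) • ψ) := by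
        refine Finset.sum_congr rfl fun i _ => ?_
        rw [map_smul, cl_cl_self hclifford, he.1 i]
        simp
    _ = -((∑ i, c i : ℝ) : ℂ) • ψ := by
        rw [Finset.sum_neg_distrib, ← Finset.sum_smul, neg_smul]
        push_cast
        rfl

theorem emTensor_of_eq_smul_cl {M : Type*}
    (hclifford : ∀ (v w : V) (ψ : H),
      cl v (cl w ψ) + cl w (cl v ψ) = -(((2 * (inner ℝ v w : ℝ)) : ℂ)) • ψ)
    (hskew : ∀ (v : V) (ψ₁ ψ₂ : H), (inner ℂ (cl v ψ₁) ψ₂ : ℂ) = - inner ℂ ψ₁ (cl v ψ₂))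
    (e : OrthonormalBasis (Fin 3) ℝ V) (φ : M → H) (d : Fin 3 → M → H) (c : Fin 3 → ℝ)
    (hd : ∀ i x, d i x = (c i : ℂ) • cl (e i) (φ x)) {x : M} (hx : φ x ≠ 0) (i j : Fin 3) :
    emTensor cl e φ d i j x = if i = j then -c i else 0 := by
  unfold emTensor
  rw [hd, hd, map_smul, map_smul, inner_add_right, inner_smul_right, inner_smul_right]
  split_ifs with hij
  · subst hij
    have hsq : inner ℂ (φ x) (cl (e i) (cl (e i) (φ x))) = -((‖φ x‖ ^ 2 : ℝ) : ℂ) := by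
      rw [cl_cl_self hclifford, e.orthonormal.1 i, inner_smul_right, inner_self_eq_norm_sq_to_K]
      simp
    have hφx : ‖φ x‖ ≠ 0 := norm_ne_zero_iff.mpr hx
    rw [hsq, ← Complex.ofReal_neg, ← Complex.ofReal_mul, ← Complex.ofReal_add, Complex.ofReal_re]
    field_simp
    ring
  · simp [Complex.mul_re, re_inner_cl_cl_eq_zero hclifford hskew (e.orthonormal.2 hij),
      re_inner_cl_cl_eq_zero hclifford hskew (e.orthonormal.2 (Ne.symm hij))]

end Clifford

theorem stmt_15_general {M V H : Type*} [NormedAddCommGroup V] [InnerProductSpace ℝ V]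
    [NormedAddCommGroup H] [InnerProductSpace ℂ H]
    (cl : V →ₗ[ℝ] H →ₗ[ℂ] H)
    (hclifford : ∀ (v w : V) (ξ : H),
      cl v (cl w ξ) + cl w (cl v ξ) = -(((2 * (inner ℝ v w : ℝ)) : ℂ)) • ξ)
    (hskew : ∀ (v : V) (ξ₁ ξ₂ : H), (inner ℂ (cl v ξ₁) ξ₂ : ℂ) = - inner ℂ ξ₁ (cl v ξ₂))
    (e : OrthonormalBasis (Fin 3) ℝ V)  -- the frame {ξ, he₁, he₂}
    (h : ℝ)
    (φ : M → H) (hφ : ∀ x, ‖φ x‖ = 1)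
    (d : Fin 3 → M → H)  -- d i x = ∇_{eᵢ}φ (x)
    (hd0 : ∀ x, d 0 x = (((-3 * h ^ 2 / 2 + 2 : ℝ)) : ℂ) • cl (e 0) (φ x))
    (hd1 : ∀ x, d 1 x = (((h ^ 2 / 2 : ℝ)) : ℂ) • cl (e 1) (φ x))
    (hd2 : ∀ x, d 2 x = (((h ^ 2 / 2 : ℝ)) : ℂ) • cl (e 2) (φ x)) :
    -- φ is an eigenspinor of D with eigenvalue h²/2 − 2
    (∀ x, ∑ i, cl (e i) (d i x) = (((h ^ 2 / 2 - 2 : ℝ)) : ℂ) • φ x)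
    -- the energy–momentum tensor is diagonal, with eigenvalues −h²/2, −h²/2, 3h²/2 − 2
    ∧ (∀ x, emTensor cl e φ d 1 1 x = -(h ^ 2 / 2)
        ∧ emTensor cl e φ d 2 2 x = -(h ^ 2 / 2)
        ∧ emTensor cl e φ d 0 0 x = 3 * h ^ 2 / 2 - 2
        ∧ ∀ i j, i ≠ j → emTensor cl e φ d i j x = 0)
    -- |ℓ^φ|² = 2(h²/2)² + (3h²/2 − 2)²
    ∧ (∀ x, ∑ i, ∑ j, (emTensor cl e φ d i j x) ^ 2 =
        2 * (h ^ 2 / 2) ^ 2 + (3 * h ^ 2 / 2 - 2) ^ 2) := by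
  set c : Fin 3 → ℝ := ![-3 * h ^ 2 / 2 + 2, h ^ 2 / 2, h ^ 2 / 2]
  have hd : ∀ i x, d i x = (c i : ℂ) • cl (e i) (φ x) := by
    intro i x
    fin_cases i
    exacts [hd0 x, hd1 x, hd2 x]
  have hT : ∀ x i j, emTensor cl e φ d i j x = if i = j then -c i else 0 := fun x =>
    emTensor_of_eq_smul_cl hclifford hskew e φ d c hd (norm_ne_zero_iff.mp (by simp [hφ x]))
  refine ⟨fun x => ?_, fun x => ?_, fun x => ?_⟩
  · simp only [hd, sum_cl_smul_cl_of_orthonormal hclifford e.orthonormal, Fin.sum_univ_three]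
    congr 2
    simp [c]
    ring
  · simp only [hT x]
    refine ⟨?_, ?_, ?_, fun i j hij => if_neg hij⟩ <;> simp [c]
    ring
  · simp [hT x, Fin.sum_univ_three, c]
    ring

/-- On the Berger sphere `(S³, g^h)` with its Spin^c structure twisted by
the trivial line bundle with connection `α = (1−h²)ξ`, the spinor `φ = ψ^h ⊗ σ` (of unit
norm), whose covariant derivatives in the `g^h`-orthonormal frame `{ξ, he₁, he₂}` are
`∇_ξ φ = (−3h²/2 + 2) ξ·φ` and `∇_{heₐ} φ = (h²/2) heₐ·φ` (a = 1,2), is an eigenspinor of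
the Spin^c Dirac operator `Dφ = ∑ᵢ eᵢ·∇_{eᵢ}φ` with eigenvalue `h²/2 − 2`; its
energy–momentum tensor is diagonal with eigenvalues `−h²/2` (double) and `3h²/2 − 2` (in
the direction `ξ`), and hence `|ℓ^φ|² = 2(h²/2)² + (3h²/2 − 2)²`. -/
theorem stmt_15 {M V H : Type*} [NormedAddCommGroup V] [InnerProductSpace ℝ V]
    [NormedAddCommGroup H] [InnerProductSpace ℂ H]
    (cl : V →ₗ[ℝ] H →ₗ[ℂ] H)
    (hclifford : ∀ (v w : V) (ξ : H),
      cl v (cl w ξ) + cl w (cl v ξ) = -(((2 * (inner ℝ v w : ℝ)) : ℂ)) • ξ)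
    (hskew : ∀ (v : V) (ξ₁ ξ₂ : H), (inner ℂ (cl v ξ₁) ξ₂ : ℂ) = - inner ℂ ξ₁ (cl v ξ₂))
    (e : OrthonormalBasis (Fin 3) ℝ V)  -- the frame {ξ, he₁, he₂}
    (h : ℝ) (hh : 1 < h)
    (φ : M → H) (hφ : ∀ x, ‖φ x‖ = 1)
    (d : Fin 3 → M → H)  -- d i x = ∇_{eᵢ}φ (x)
    (hd0 : ∀ x, d 0 x = (((-3 * h ^ 2 / 2 + 2 : ℝ)) : ℂ) • cl (e 0) (φ x))
    (hd1 : ∀ x, d 1 x = (((h ^ 2 / 2 : ℝ)) : ℂ) • cl (e 1) (φ x))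
    (hd2 : ∀ x, d 2 x = (((h ^ 2 / 2 : ℝ)) : ℂ) • cl (e 2) (φ x)) :
    -- φ is an eigenspinor of D with eigenvalue h²/2 − 2
    (∀ x, ∑ i, cl (e i) (d i x) = (((h ^ 2 / 2 - 2 : ℝ)) : ℂ) • φ x)
    -- the energy–momentum tensor is diagonal, with eigenvalues −h²/2, −h²/2, 3h²/2 − 2
    ∧ (∀ x, emTensor cl e φ d 1 1 x = -(h ^ 2 / 2)
        ∧ emTensor cl e φ d 2 2 x = -(h ^ 2 / 2)
        ∧ emTensor cl e φ d 0 0 x = 3 * h ^ 2 / 2 - 2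
        ∧ ∀ i j, i ≠ j → emTensor cl e φ d i j x = 0)
    -- |ℓ^φ|² = 2(h²/2)² + (3h²/2 − 2)²
    ∧ (∀ x, ∑ i, ∑ j, (emTensor cl e φ d i j x) ^ 2 =
        2 * (h ^ 2 / 2) ^ 2 + (3 * h ^ 2 / 2 - 2) ^ 2) :=
  stmt_15_general cl hclifford hskew e h φ hφ d hd0 hd1 hd2
end
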